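/- Every lower integral 𝓘 on a set A is homogeneous: 𝓘(a·f) = a·𝓘(f) for all scalars a ∈ ℝ_l⁺ and all functions f : A → ℝ_l⁺. Together with additivity this makes lower integrals ℝ_l⁺-linear. -/
import Mathlib


/-- The initial σ-frame `𝕊`, as the least subset of the propositions `Ω = Prop`
containing `False` and `True` and closed under joins of increasing ω-chains
(equivalently, the image of the free ω-cpo completion of `𝔹 = {⊥ ≤ ⊤}` in `Ω`). -/
inductive InS : Prop → Prop
  | bot : InS False
  | top : InS True
  | sup (c : ℕ → Prop) (mono : ∀ n, c n → c (n + 1)) (h : ∀ n, InS (c n)) :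
      InS (∃ n, c n)

theorem InS.of_decidable (p : Prop) [Decidable p] : InS p := by
  by_cases h : p
  · rw [eq_true h]; exact InS.top
  · rw [eq_false h]; exact InS.bot

/-- A map between preorders is ω-(Scott-)continuous if it is monotone and preserves
least upper bounds of enumerable directed subsets. -/
def OmegaContinuous {C D : Type} [Preorder C] [Preorder D] (f : C → D) : Prop :=
  Monotone f ∧
    ∀ (U : Set C) (x : C), U.Countable → U.Nonempty → DirectedOn (· ≤ ·) U →
      IsLUB U x → IsLUB (f '' U) (f x)

/-- A preorder is an ω-cpo if every enumerable directed subset has a least upper bound. -/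
def IsOmegaCPO (C : Type) [Preorder C] : Prop :=
  ∀ U : Set C, U.Countable → U.Nonempty → DirectedOn (· ≤ ·) U → ∃ x, IsLUB U x

/-- A cover-preserving monotone map from an ω-cpo presentation `(P, Cov)` into an
ordered set: the image of each cover has a least upper bound above the image of the
covered element. -/
def CovMorphism {P C : Type} [Preorder P] [Preorder C]
    (Cov : P → Set P → Prop) (f : P → C) : Prop :=
  Monotone f ∧ ∀ p U, Cov p U → ∃ s, IsLUB (f '' U) s ∧ f p ≤ s

/-- `(Pω, η)` is the free ω-cpo completion of the ω-cpo presentation `(P, Cov)`: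
`Pω` is an ω-cpo, `η` is a cover-preserving monotone map, and every cover-preserving
monotone map from `P` into an ω-cpo extends uniquely to an ω-continuous map on `Pω`. -/
structure IsFreeOmegaCompletion {P : Type} [Preorder P] (Cov : P → Set P → Prop)
    (Pω : Type) [PartialOrder Pω] (η : P → Pω) : Prop where
  cpo : IsOmegaCPO Pω
  eta_morph : CovMorphism Cov η
  extend_unique : ∀ (C : Type) [PartialOrder C], IsOmegaCPO C →
    ∀ f : P → C, CovMorphism Cov f →
      ∃! g : Pω → C, OmegaContinuous g ∧ ∀ p, g (η p) = f p

/-- The Sierpinski space as a subtype of the propositions, ordered by implication. -/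
abbrev Sierp := {p : Prop // InS p}

theorem InS.or {p q : Prop} (hp : InS p) (hq : InS q) : InS (p ∨ q) := by
  induction hp with
  | bot => simp only [false_or]; exact hq
  | top => simp only [true_or]; exact InS.top
  | sup c mono h ih =>
      have e : ((∃ n, c n) ∨ q) = (∃ n, c n ∨ q) := propext <| by
        constructor
        · rintro (⟨n, hn⟩ | hq')
          · exact ⟨n, Or.inl hn⟩
          · exact ⟨0, Or.inr hq'⟩
        · rintro ⟨n, hn | hq'⟩
          · exact Or.inl ⟨n, hn⟩
          · exact Or.inr hq'
      rw [e]
      exact InS.sup _ (fun n => Or.imp_left (mono n)) ih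

theorem InS.and {p q : Prop} (hp : InS p) (hq : InS q) : InS (p ∧ q) := by
  induction hp with
  | bot => simp only [false_and]; exact InS.bot
  | top => simp only [true_and]; exact hq
  | sup c mono h ih =>
      have e : ((∃ n, c n) ∧ q) = (∃ n, c n ∧ q) := propext <| by
        constructor
        · rintro ⟨⟨n, hn⟩, hq'⟩
          exact ⟨n, hn, hq'⟩
        · rintro ⟨n, hn, hq'⟩
          exact ⟨⟨n, hn⟩, hq'⟩
      rw [e]
      exact InS.sup _ (fun n => And.imp_left (mono n)) ih

theorem InS.exists_nat (p : ℕ → Prop) (h : ∀ n, InS (p n)) : InS (∃ n, p n) := by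
  have key : ∀ m, InS (∃ k, k ≤ m ∧ p k) := by
    intro m
    induction m with
    | zero =>
        have e : (∃ k, k ≤ 0 ∧ p k) = p 0 := propext <| by
          constructor
          · rintro ⟨k, hk, hp⟩
            rwa [Nat.le_zero.mp hk] at hp
          · exact fun hp => ⟨0, le_refl _, hp⟩
        rw [e]; exact h 0
    | succ m ih =>
        have e : (∃ k, k ≤ m + 1 ∧ p k) = ((∃ k, k ≤ m ∧ p k) ∨ p (m + 1)) :=
          propext <| by
            constructor
            · rintro ⟨k, hk, hp⟩
              rcases Nat.eq_or_lt_of_le hk with rfl | hk'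
              · exact Or.inr hp
              · exact Or.inl ⟨k, Nat.lt_succ_iff.mp hk', hp⟩
            · rintro (⟨k, hk, hp⟩ | hp)
              · exact ⟨k, hk.trans (Nat.le_succ m), hp⟩
              · exact ⟨m + 1, le_refl _, hp⟩
        rw [e]; exact ih.or (h (m + 1))
  have e : (∃ n, p n) = (∃ m, ∃ k, k ≤ m ∧ p k) := propext <| by
    constructor
    · rintro ⟨n, hn⟩
      exact ⟨n, n, le_refl _, hn⟩
    · rintro ⟨m, k, _, hk⟩
      exact ⟨k, hk⟩
  rw [e]
  exact InS.sup _ (fun m ⟨k, hk, hp⟩ => ⟨k, hk.trans (Nat.le_succ m), hp⟩) key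

def Sierp.botS : Sierp := ⟨False, InS.bot⟩
def Sierp.topS : Sierp := ⟨True, InS.top⟩
def Sierp.or (s t : Sierp) : Sierp := ⟨s.1 ∨ t.1, s.2.or t.2⟩
def Sierp.and (s t : Sierp) : Sierp := ⟨s.1 ∧ t.1, s.2.and t.2⟩

/-- Enumerable joins in the Sierpinski space. -/
def Sierp.joinSeq (s : ℕ → Sierp) : Sierp :=
  ⟨∃ n, (s n).1, InS.exists_nat _ (fun n => (s n).2)⟩

/-- A lower real: an `𝕊`-valued, inhabited, rounded, downward-closed cut of rationals. -/
structure LowerReal where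
  cut : ℚ → Prop
  inS : ∀ q, InS (cut q)
  inhab : ∃ q, cut q
  rounded : ∀ q, cut q → ∃ q', q < q' ∧ cut q'
  lower : ∀ q q', q < q' → cut q' → cut q

instance : Preorder LowerReal where
  le L₁ L₂ := ∀ q, L₁.cut q → L₂.cut q
  le_refl _ _ h := h
  le_trans _ _ _ h₁ h₂ q hq := h₂ q (h₁ q hq)

/-- The lower real associated to a rational number. -/
def ratLR (q : ℚ) : LowerReal where
  cut p := p < q
  inS _ := InS.of_decidable _
  inhab := ⟨q - 1, by linarith⟩
  rounded p hp := ⟨(p + q) / 2, by constructor <;> linarith⟩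
  lower _ _ h h' := lt_trans h h'

/-- The non-negative rationals. -/
abbrev QPlus := {q : ℚ // 0 ≤ q}

/-- The non-negative lower reals `ℝ_l⁺`. -/
abbrev NNLowerReal := {L : LowerReal // ∀ q : ℚ, q < 0 → L.cut q}

/-- The non-negative lower real associated to a non-negative rational. -/
def ratNN (q : QPlus) : NNLowerReal :=
  ⟨ratLR q.1, fun _ hp => lt_of_lt_of_le hp q.2⟩

def zeroNN : NNLowerReal := ratNN ⟨0, le_refl 0⟩
def oneNN : NNLowerReal := ratNN ⟨1, by norm_num⟩

/-- `r : 𝕊 → ℝ_l⁺`, the unique ω-continuous map with `r ⊥ = 0` and `r ⊤ = 1`;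
`indicatorLR (U a)` is the real indicator function `𝟙_U` of an open `U`. -/
def indicatorLR (s : Sierp) : NNLowerReal :=
  ⟨{ cut := fun q => q < 0 ∨ (s.1 ∧ q < 1)
     inS := fun q => by
       show InS (q < 0 ∨ (s.1 ∧ q < 1))
       by_cases h0 : q < 0
       · rw [eq_true (Or.inl h0 : q < 0 ∨ (s.1 ∧ q < 1))]; exact InS.top
       · rw [eq_false h0, false_or]
         by_cases h1 : q < 1
         · rw [eq_true h1, and_true]; exact s.2
         · rw [eq_false h1, and_false]; exact InS.bot
     inhab := ⟨-1, Or.inl (by norm_num)⟩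
     rounded := fun q hq => by
       rcases hq with h | ⟨hs, h1⟩
       · exact ⟨q / 2, by linarith, Or.inl (by linarith)⟩
       · exact ⟨(q + 1) / 2, by
           constructor
           · linarith
           · exact Or.inr ⟨hs, by linarith⟩⟩
     lower := fun q q' h hq' => by
       rcases hq' with h' | ⟨hs, h1⟩
       · exact Or.inl (lt_trans h h')
       · by_cases h0 : q < 0
         · exact Or.inl h0
         · exact Or.inr ⟨hs, lt_trans h h1⟩ },
   fun q hq => Or.inl hq⟩

/-- Specification of the addition on the non-negative lower reals: ω-continuous in
each argument and extending addition of non-negative rationals. -/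
def AddSpecNN (add : NNLowerReal → NNLowerReal → NNLowerReal) : Prop :=
  (∀ L, OmegaContinuous (add L)) ∧ (∀ L, OmegaContinuous (fun x => add x L)) ∧
    ∀ q q' : QPlus, add (ratNN q) (ratNN q') = ratNN ⟨q.1 + q'.1, add_nonneg q.2 q'.2⟩

/-- Specification of the multiplication on the non-negative lower reals: ω-continuous
in each argument and extending multiplication of non-negative rationals. -/
def MulSpecNN (mul : NNLowerReal → NNLowerReal → NNLowerReal) : Prop :=
  (∀ L, OmegaContinuous (mul L)) ∧ (∀ L, OmegaContinuous (fun x => mul x L)) ∧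
    ∀ q q' : QPlus, mul (ratNN q) (ratNN q') = ratNN ⟨q.1 * q'.1, mul_nonneg q.2 q'.2⟩

/-- A lower integral on `A`: an ω-continuous, bottom-preserving, additive map
`(A → ℝ_l⁺) → ℝ_l⁺`. -/
def IsLowerIntegral {A : Type} (add : NNLowerReal → NNLowerReal → NNLowerReal)
    (I : (A → NNLowerReal) → NNLowerReal) : Prop :=
  OmegaContinuous I ∧ I (fun _ => zeroNN) = zeroNN ∧
    ∀ f g : A → NNLowerReal, I (fun a => add (f a) (g a)) = add (I f) (I g)

/-- A valuation on `A`: an ω-continuous, bottom-preserving, modular map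
`𝒪(A) = (A → 𝕊) → ℝ_l⁺`. -/
def IsValuation {A : Type} (add : NNLowerReal → NNLowerReal → NNLowerReal)
    (μ : (A → Sierp) → NNLowerReal) : Prop :=
  OmegaContinuous μ ∧ μ (fun _ => Sierp.botS) = zeroNN ∧
    ∀ U V : A → Sierp,
      add (μ U) (μ V) =
        add (μ (fun a => (U a).or (V a))) (μ (fun a => (U a).and (V a)))

section HomogeneityAux

lemma LowerReal.ext' {x y : LowerReal} (h : x.cut = y.cut) : x = y := by
  cases x; cases y; cases h; rfl

lemma NNLowerReal.le_def {x y : NNLowerReal} :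
    x ≤ y ↔ ∀ q, x.1.cut q → y.1.cut q := Iff.rfl

lemma NNLowerReal.antisymm {x y : NNLowerReal} (h1 : x ≤ y) (h2 : y ≤ x) : x = y :=
  Subtype.ext (LowerReal.ext' (funext fun q => propext ⟨h1 q, h2 q⟩))

lemma NNLowerReal.lub_unique {S : Set NNLowerReal} {x y : NNLowerReal}
    (hx : IsLUB S x) (hy : IsLUB S y) : x = y :=
  NNLowerReal.antisymm (hx.2 hy.1) (hy.2 hx.1)

lemma ratNN_congr {p q : QPlus} (h : p.1 = q.1) : ratNN p = ratNN q := by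
  cases Subtype.ext h; rfl

lemma ratNN_mono {p q : QPlus} (h : p.1 ≤ q.1) : ratNN p ≤ ratNN q :=
  fun r hr => lt_of_lt_of_le hr h

/-- The set of rational approximations of a non-negative lower real. -/
def QsetNN (x : NNLowerReal) : Set QPlus := {q | x.1.cut q.1 ∨ q.1 = 0}

def SsetNN (x : NNLowerReal) : Set NNLowerReal := ratNN '' QsetNN x

lemma SsetNN_countable (x : NNLowerReal) : (SsetNN x).Countable :=
  (Set.to_countable _).image _

lemma SsetNN_nonempty (x : NNLowerReal) : (SsetNN x).Nonempty :=
  ⟨ratNN ⟨0, le_refl 0⟩, ⟨0, le_refl 0⟩, Or.inr rfl, rfl⟩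

lemma QsetNN_max {x : NNLowerReal} {p q : QPlus} (hp : p ∈ QsetNN x) (hq : q ∈ QsetNN x) :
    (⟨max p.1 q.1, le_max_of_le_left p.2⟩ : QPlus) ∈ QsetNN x := by
  show x.1.cut (max p.1 q.1) ∨ max p.1 q.1 = 0
  rcases hp with hp | hp <;> rcases hq with hq | hq
  · rcases max_cases p.1 q.1 with ⟨e, _⟩ | ⟨e, _⟩ <;> rw [e]
    · exact Or.inl hp
    · exact Or.inl hq
  · rw [max_eq_left (hq.le.trans p.2)]; exact Or.inl hp
  · rw [max_eq_right (hp.le.trans q.2)]; exact Or.inl hq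
  · rw [hp, hq]; simp

lemma SsetNN_directed (x : NNLowerReal) : DirectedOn (· ≤ ·) (SsetNN x) := by
  rintro _ ⟨p, hp, rfl⟩ _ ⟨q, hq, rfl⟩
  exact ⟨ratNN ⟨max p.1 q.1, le_max_of_le_left p.2⟩, ⟨_, QsetNN_max hp hq, rfl⟩,
    ratNN_mono (le_max_left _ _), ratNN_mono (le_max_right _ _)⟩

lemma SsetNN_isLUB (x : NNLowerReal) : IsLUB (SsetNN x) x := by
  constructor
  · rintro _ ⟨q, hq, rfl⟩ p hp
    rcases hq with h | h
    · exact x.1.lower p q.1 hp h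
    · exact x.2 p (h ▸ hp)
  · intro b hb q hq
    by_cases h0 : q < 0
    · exact b.2 q h0
    · obtain ⟨q', hlt, hq'⟩ := x.1.rounded q hq
      have h0' : (0 : ℚ) ≤ q' := le_of_lt (lt_of_le_of_lt (not_lt.mp h0) hlt)
      exact hb ⟨⟨q', h0'⟩, Or.inl hq', rfl⟩ q hlt

lemma directedOn_image_of_monotone {C D : Type} [Preorder C] [Preorder D]
    {f : C → D} (hf : Monotone f) {U : Set C} (h : DirectedOn (· ≤ ·) U) :
    DirectedOn (· ≤ ·) (f '' U) := by
  rintro _ ⟨u, hu, rfl⟩ _ ⟨v, hv, rfl⟩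
  obtain ⟨w, hw, h1, h2⟩ := h u hu v hv
  exact ⟨f w, ⟨w, hw, rfl⟩, hf h1, hf h2⟩

lemma OmegaContinuous.comp' {C D E : Type} [Preorder C] [Preorder D] [Preorder E]
    {g : D → E} {f : C → D} (hg : OmegaContinuous g) (hf : OmegaContinuous f) :
    OmegaContinuous (fun x => g (f x)) := by
  refine ⟨fun a b h => hg.1 (hf.1 h), fun U x hc hne hdir hlub => ?_⟩
  have h1 := hf.2 U x hc hne hdir hlub
  have h2 := hg.2 (f '' U) (f x) (hc.image f) (hne.image f)
    (directedOn_image_of_monotone hf.1 hdir) h1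
  rwa [Set.image_image] at h2

lemma omegaContinuous_const {C D : Type} [Preorder C] [Preorder D] (d : D) :
    OmegaContinuous (fun _ : C => d) := by
  refine ⟨fun _ _ _ => le_refl d, fun U x hc hne hdir hlub => ?_⟩
  rw [hne.image_const]
  exact isLUB_singleton

lemma omegaContinuous_id' {C : Type} [Preorder C] :
    OmegaContinuous (fun x : C => x) := by
  refine ⟨fun _ _ h => h, fun U x hc hne hdir hlub => ?_⟩
  rwa [Set.image_id']

lemma omegaContinuous_add_diag {add : NNLowerReal → NNLowerReal → NNLowerReal}
    (hadd : AddSpecNN add) {C : Type} [Preorder C] {f g : C → NNLowerReal}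
    (hf : OmegaContinuous f) (hg : OmegaContinuous g) :
    OmegaContinuous (fun x => add (f x) (g x)) := by
  have hmono : Monotone (fun x => add (f x) (g x)) := fun a b h =>
    le_trans ((hadd.1 (f a)).1 (hg.1 h)) ((hadd.2.1 (g b)).1 (hf.1 h))
  refine ⟨hmono, fun U x hc hne hdir hlub => ?_⟩
  constructor
  · rintro _ ⟨u, hu, rfl⟩
    exact hmono (hlub.1 hu)
  · intro b hb
    have key : ∀ u ∈ U, ∀ v ∈ U, add (f u) (g v) ≤ b := by
      intro u hu v hv
      obtain ⟨w, hw, h1, h2⟩ := hdir u hu v hv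
      exact le_trans (le_trans ((hadd.1 (f u)).1 (hg.1 h2)) ((hadd.2.1 (g w)).1 (hf.1 h1)))
        (hb ⟨w, hw, rfl⟩)
    have hgx := hg.2 U x hc hne hdir hlub
    have hfx := hf.2 U x hc hne hdir hlub
    have key2 : ∀ u ∈ U, add (f u) (g x) ≤ b := by
      intro u hu
      have h3 := (hadd.1 (f u)).2 (g '' U) (g x) (hc.image g) (hne.image g)
        (directedOn_image_of_monotone hg.1 hdir) hgx
      refine h3.2 ?_
      rintro _ ⟨_, ⟨v, hv, rfl⟩, rfl⟩
      exact key u hu v hv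
    have h4 := (hadd.2.1 (g x)).2 (f '' U) (f x) (hc.image f) (hne.image f)
      (directedOn_image_of_monotone hf.1 hdir) hfx
    refine h4.2 ?_
    rintro _ ⟨_, ⟨u, hu, rfl⟩, rfl⟩
    exact key2 u hu

/-- Two ω-continuous self-maps of `ℝ_l⁺` agreeing on the rationals agree everywhere. -/
lemma agree_of_rat {f g : NNLowerReal → NNLowerReal}
    (hf : OmegaContinuous f) (hg : OmegaContinuous g)
    (h : ∀ q : QPlus, f (ratNN q) = g (ratNN q)) (x : NNLowerReal) : f x = g x := by
  have hlf := hf.2 (SsetNN x) x (SsetNN_countable x) (SsetNN_nonempty x)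
    (SsetNN_directed x) (SsetNN_isLUB x)
  have hlg := hg.2 (SsetNN x) x (SsetNN_countable x) (SsetNN_nonempty x)
    (SsetNN_directed x) (SsetNN_isLUB x)
  have him : f '' SsetNN x = g '' SsetNN x := by
    refine Set.image_congr ?_
    rintro _ ⟨q, hq, rfl⟩
    exact h q
  rw [him] at hlf
  exact NNLowerReal.lub_unique hlf hlg

end HomogeneityAux

def QPlus.ofNat (n : ℕ) : QPlus := ⟨(n : ℚ), Nat.cast_nonneg n⟩
def QPlus.succ' (q : QPlus) : QPlus := ⟨q.1 + 1, add_nonneg q.2 zero_le_one⟩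
def QPlus.mul' (p q : QPlus) : QPlus := ⟨p.1 * q.1, mul_nonneg p.2 q.2⟩

/-- every lower integral `𝓘` on a set `A` is homogeneous:
`𝓘(a·f) = a·𝓘(f)` for all scalars `a ∈ ℝ_l⁺` and all `f : A → ℝ_l⁺`; together with
additivity this makes lower integrals `ℝ_l⁺`-linear. -/
theorem lower_integral_homogeneous {A : Type}
    (add mul : NNLowerReal → NNLowerReal → NNLowerReal)
    (hadd : AddSpecNN add) (hmul : MulSpecNN mul)
    (I : (A → NNLowerReal) → NNLowerReal) (hI : IsLowerIntegral add I) :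
    ∀ (a : NNLowerReal) (f : A → NNLowerReal),
      I (fun x => mul a (f x)) = mul a (I f) := by
  obtain ⟨hIcont, hIzero, hIadd⟩ := hI
  -- basic multiplication facts, all via density of the rationals
  have lem_zero : ∀ x, mul zeroNN x = zeroNN :=
    agree_of_rat (hmul.1 zeroNN) (omegaContinuous_const zeroNN)
      (fun q => by
        show mul (ratNN ⟨0, le_refl 0⟩) (ratNN q) = zeroNN
        rw [hmul.2.2]
        exact ratNN_congr (zero_mul q.1))
  have lem_one : ∀ x, mul (ratNN ⟨1, zero_le_one⟩) x = x :=
    agree_of_rat (hmul.1 _) omegaContinuous_id'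
      (fun q => by rw [hmul.2.2]; exact ratNN_congr (one_mul q.1))
  have lem_assoc : ∀ (p q : QPlus) x,
      mul (ratNN p) (mul (ratNN q) x) = mul (ratNN (QPlus.mul' p q)) x := by
    intro p q
    exact agree_of_rat ((hmul.1 (ratNN p)).comp' (hmul.1 (ratNN q))) (hmul.1 _)
      (fun r => by
        rw [hmul.2.2, hmul.2.2, hmul.2.2]
        refine ratNN_congr ?_
        show p.1 * (q.1 * r.1) = p.1 * q.1 * r.1
        ring)
  have lem_succ : ∀ (q : QPlus) x,
      mul (ratNN (QPlus.succ' q)) x = add x (mul (ratNN q) x) := by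
    intro q
    exact agree_of_rat (hmul.1 _)
      (omegaContinuous_add_diag hadd omegaContinuous_id' (hmul.1 (ratNN q)))
      (fun r => by
        rw [hmul.2.2, hmul.2.2, hadd.2.2]
        exact ratNN_congr (by show (q.1 + 1) * r.1 = r.1 + q.1 * r.1; ring))
  -- homogeneity for natural number scalars
  have nat_hom : ∀ (n : ℕ) (g : A → NNLowerReal),
      I (fun x => mul (ratNN (QPlus.ofNat n)) (g x))
        = mul (ratNN (QPlus.ofNat n)) (I g) := by
    intro n
    induction n with
    | zero =>
      intro g
      have e0 : ratNN (QPlus.ofNat 0) = zeroNN := ratNN_congr (by norm_num [QPlus.ofNat])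
      rw [e0]
      simp only [lem_zero]
      exact hIzero
    | succ n ih =>
      intro g
      have e1 : ratNN (QPlus.ofNat (n + 1)) = ratNN (QPlus.succ' (QPlus.ofNat n)) :=
        ratNN_congr (by show ((n + 1 : ℕ) : ℚ) = (n : ℚ) + 1; push_cast; ring)
      rw [e1]
      calc I (fun x => mul (ratNN (QPlus.succ' (QPlus.ofNat n))) (g x))
          = I (fun x => add (g x) (mul (ratNN (QPlus.ofNat n)) (g x))) := by
            congr 1; funext x; exact lem_succ (QPlus.ofNat n) (g x)
        _ = add (I g) (I (fun x => mul (ratNN (QPlus.ofNat n)) (g x))) := hIadd g _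
        _ = add (I g) (mul (ratNN (QPlus.ofNat n)) (I g)) := by rw [ih g]
        _ = mul (ratNN (QPlus.succ' (QPlus.ofNat n))) (I g) :=
            (lem_succ (QPlus.ofNat n) (I g)).symm
  -- cancellation of positive natural scalars
  have lem_cancel : ∀ (n : ℕ), 0 < n → ∀ X Y : NNLowerReal,
      mul (ratNN (QPlus.ofNat n)) X = mul (ratNN (QPlus.ofNat n)) Y → X = Y := by
    intro n hn X Y h
    have hnz : ((n : ℚ)) ≠ 0 := by positivity
    have hninv : (0 : ℚ) ≤ ((n : ℚ))⁻¹ := by positivity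
    have h2 := congrArg (mul (ratNN ⟨((n : ℚ))⁻¹, hninv⟩)) h
    rw [lem_assoc, lem_assoc] at h2
    have e : ratNN (QPlus.mul' ⟨((n : ℚ))⁻¹, hninv⟩ (QPlus.ofNat n))
        = ratNN ⟨1, zero_le_one⟩ :=
      ratNN_congr (by show ((n : ℚ))⁻¹ * (n : ℚ) = 1; field_simp)
    rw [e, lem_one, lem_one] at h2
    exact h2
  -- homogeneity for rational scalars
  have rat_hom : ∀ (q : QPlus) (g : A → NNLowerReal),
      I (fun x => mul (ratNN q) (g x)) = mul (ratNN q) (I g) := by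
    intro q g
    have hnum : (0 : ℤ) ≤ q.1.num := Rat.num_nonneg.mpr q.2
    have hden : ((q.1.den : ℚ)) ≠ 0 := by
      exact_mod_cast q.1.den_nz
    have h1 : q.1 * ((q.1.den : ℚ)) = ((q.1.num : ℤ) : ℚ) :=
      (eq_div_iff hden).mp (Rat.num_div_den q.1).symm
    have key : (QPlus.mul' (QPlus.ofNat q.1.den) q).1 = (QPlus.ofNat q.1.num.toNat).1 := by
      show ((q.1.den : ℚ)) * q.1 = ((q.1.num.toNat : ℕ) : ℚ)
      rw [mul_comm, h1]
      norm_cast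
      exact (Int.toNat_of_nonneg hnum).symm
    apply lem_cancel q.1.den q.1.pos
    calc mul (ratNN (QPlus.ofNat q.1.den)) (I (fun x => mul (ratNN q) (g x)))
        = I (fun x => mul (ratNN (QPlus.ofNat q.1.den)) (mul (ratNN q) (g x))) :=
          (nat_hom q.1.den _).symm
      _ = I (fun x => mul (ratNN (QPlus.mul' (QPlus.ofNat q.1.den) q)) (g x)) := by
          congr 1; funext x; exact lem_assoc _ _ _
      _ = I (fun x => mul (ratNN (QPlus.ofNat q.1.num.toNat)) (g x)) := by
          rw [ratNN_congr key]
      _ = mul (ratNN (QPlus.ofNat q.1.num.toNat)) (I g) := nat_hom _ _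
      _ = mul (ratNN (QPlus.mul' (QPlus.ofNat q.1.den) q)) (I g) := by
          rw [ratNN_congr key]
      _ = mul (ratNN (QPlus.ofNat q.1.den)) (mul (ratNN q) (I g)) :=
          (lem_assoc _ _ _).symm
  -- the general case, by density of rational scalars
  intro a f
  have hmono1 : Monotone (fun u : NNLowerReal => (fun x => mul u (f x) : A → NNLowerReal)) := by
    intro u v huv
    exact fun x => (hmul.2.1 (f x)).1 huv
  have hFlub : IsLUB ((fun u => fun x => mul u (f x)) '' SsetNN a)
      (fun x => mul a (f x)) := by
    constructor
    · rintro _ ⟨u, hu, rfl⟩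
      exact hmono1 ((SsetNN_isLUB a).1 hu)
    · intro h hh
      have : ∀ x, mul a (f x) ≤ h x := by
        intro x
        have hx := (hmul.2.1 (f x)).2 (SsetNN a) a (SsetNN_countable a) (SsetNN_nonempty a)
          (SsetNN_directed a) (SsetNN_isLUB a)
        refine hx.2 ?_
        rintro _ ⟨u, hu, rfl⟩
        exact hh ⟨u, hu, rfl⟩ x
      exact this
  have hIF := hIcont.2 ((fun u => fun x => mul u (f x)) '' SsetNN a)
    (fun x => mul a (f x))
    ((SsetNN_countable a).image _) ((SsetNN_nonempty a).image _)
    (directedOn_image_of_monotone hmono1 (SsetNN_directed a)) hFlub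
  have him : I '' ((fun u => fun x => mul u (f x)) '' SsetNN a)
      = (fun u => mul u (I f)) '' SsetNN a := by
    rw [Set.image_image]
    refine Set.image_congr ?_
    rintro _ ⟨q, hq, rfl⟩
    exact rat_hom q f
  rw [him] at hIF
  have hR := (hmul.2.1 (I f)).2 (SsetNN a) a (SsetNN_countable a) (SsetNN_nonempty a)
    (SsetNN_directed a) (SsetNN_isLUB a)
  exact NNLowerReal.lub_unique hIF hR
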